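/- arXiv:2406.13013 — 5 statements merged into one kernel-verified Lean document; each statement's English description precedes it below -/
import Mathlib

section
/- For a prime number $c$ and integers $a,b$ with $c \nmid a$ or $c \nmid b$, the Kloosterman sum $S(a,b;c) = \sum_{x \in (\mathbb{Z}/c\mathbb{Z})^*} e^{2\pi i (ax + b\bar{x})/c}$ is nonzero. -/
/-- The classical Kloosterman sum `S(a,b;c)`. -/
noncomputable def kloosterman (a b : ℤ) (c : ℕ) : ℂ :=
  ∑ x ∈ Finset.range c, if Nat.gcd x c = 1 then
    Complex.exp (2 * Real.pi * Complex.I *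
      ((a : ℂ) * (x : ℂ) + (b : ℂ) * ((((x : ZMod c)⁻¹).val : ℕ) : ℂ)) / (c : ℂ))
  else 0

open Finset Polynomial in
theorem stmt0 (c : ℕ) (hc : c.Prime) (a b : ℤ)
    (h : ¬ ((c : ℤ) ∣ a) ∨ ¬ ((c : ℤ) ∣ b)) :
    kloosterman a b c ≠ 0 := by
  classical
  clear h
  haveI : Fact c.Prime := ⟨hc⟩
  have hc0 : c ≠ 0 := hc.ne_zero
  have hc2 : 2 ≤ c := hc.two_le
  set ζ : ℂ := Complex.exp (2 * Real.pi * Complex.I / c) with hζdef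
  have hprim : IsPrimitiveRoot ζ c := Complex.isPrimitiveRoot_exp c hc0
  -- key: exp of integer multiple
  have hkey : ∀ m : ℤ, Complex.exp (2 * Real.pi * Complex.I * (m : ℂ) / c) =
      ζ ^ (((m : ZMod c)).val) := by
    intro m
    have hzpow : ζ ^ (((m : ZMod c)).val) =
        Complex.exp (2 * Real.pi * Complex.I * (((m : ZMod c)).val : ℂ) / c) := by
      rw [← Complex.exp_nat_mul]
      ring_nf
    rw [hzpow]
    set v : ℕ := ((m : ZMod c)).val
    have hdvd : (c : ℤ) ∣ m - v := by
      have : ((m - v : ℤ) : ZMod c) = 0 := by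
        push_cast
        rw [ZMod.natCast_val, ZMod.cast_id]
        ring
      exact (ZMod.intCast_zmod_eq_zero_iff_dvd _ _).mp this
    obtain ⟨k, hk⟩ := hdvd
    have hm : (m : ℂ) = v + c * k := by
      have : (m : ℤ) = v + c * k := by linarith [hk]
      exact_mod_cast congrArg (Int.cast : ℤ → ℂ) this
    rw [hm]
    have hcne : (c : ℂ) ≠ 0 := Nat.cast_ne_zero.mpr hc0
    rw [show 2 * Real.pi * Complex.I * ((v : ℂ) + c * k) / c =
        2 * Real.pi * Complex.I * (v : ℂ) / c + k * (2 * Real.pi * Complex.I) by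
      field_simp]
    rw [Complex.exp_add, Complex.exp_int_mul_two_pi_mul_I, mul_one]
  -- exponent function
  set e : ℕ → ℕ := fun x => (((a * x + b * (((x : ZMod c)⁻¹).val : ℤ) : ℤ) : ZMod c)).val
    with he
  set s : Finset ℕ := (Finset.range c).filter (fun x => Nat.gcd x c = 1) with hs
  have hsum : kloosterman a b c = ∑ x ∈ s, ζ ^ (e x) := by
    rw [kloosterman, ← Finset.sum_filter, ← hs]
    apply Finset.sum_congr rfl
    intro x _
    rw [← hkey]
    congr 1
    push_cast
    ring
  intro hzero
  rw [hsum] at hzero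
  -- the polynomial
  set P : ℚ[X] := ∑ x ∈ s, X ^ (e x) with hP
  have hev : aeval ζ P = 0 := by
    rw [hP, map_sum]
    simpa using hzero
  have hdeg : P.natDegree ≤ c - 1 := by
    apply Polynomial.natDegree_sum_le_of_forall_le
    intro x _
    rw [natDegree_X_pow]
    have : e x < c := ZMod.val_lt _
    omega
  have hcard : s.card = c - 1 := by
    have : s.card = c.totient := by
      rw [Nat.totient, hs]
      congr 1
      apply Finset.filter_congr
      intro x _
      simp [Nat.Coprime, Nat.gcd_comm]
    rw [this, Nat.totient_prime hc]
  have hP1 : P.eval 1 = (c - 1 : ℕ) := by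
    rw [hP, Polynomial.eval_finset_sum]
    simp [hcard]
  have hPne : P ≠ 0 := by
    intro h0
    rw [h0, Polynomial.eval_zero] at hP1
    have : c - 1 = 0 := by exact_mod_cast hP1.symm
    omega
  have hdvd : cyclotomic c ℚ ∣ P := by
    rw [cyclotomic_eq_minpoly_rat hprim hc.pos]
    exact minpoly.dvd ℚ ζ hev
  obtain ⟨q, hq⟩ := hdvd
  have hΦne : cyclotomic c ℚ ≠ 0 := cyclotomic_ne_zero c ℚ
  have hqne : q ≠ 0 := by rintro rfl; simp at hq; exact hPne hq
  have hΦdeg : (cyclotomic c ℚ).natDegree = c - 1 := by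
    rw [natDegree_cyclotomic, Nat.totient_prime hc]
  have hqdeg : q.natDegree = 0 := by
    have := Polynomial.natDegree_mul hΦne hqne
    rw [← hq, hΦdeg] at this
    omega
  obtain ⟨r, hr⟩ := Polynomial.natDegree_eq_zero.mp hqdeg
  -- coeff 0 of P is a natural number
  have hcoeff : P.coeff 0 = ((s.filter (fun x => e x = 0)).card : ℚ) := by
    rw [hP, Polynomial.finset_sum_coeff]
    rw [Finset.card_filter]
    push_cast
    apply Finset.sum_congr rfl
    intro x _
    rw [Polynomial.coeff_X_pow]
    simp [eq_comm]
  set n : ℕ := (s.filter (fun x => e x = 0)).card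
  have hr' : r = (n : ℚ) := by
    have : P.coeff 0 = (cyclotomic c ℚ).coeff 0 * r := by
      rw [hq, ← hr]
      simp [Polynomial.coeff_mul_C]
    rw [cyclotomic_coeff_zero ℚ (by omega), one_mul] at this
    rw [← this, hcoeff]
  have heval : ((c : ℚ) - 1) = c * n := by
    have h1 : P.eval 1 = (cyclotomic c ℚ).eval 1 * r := by
      rw [hq, ← hr]
      simp
    rw [hP1, eval_one_cyclotomic_prime, hr'] at h1
    push_cast at h1 ⊢
    rw [Nat.cast_sub (by omega)] at h1
    push_cast at h1
    linarith
  have : (c : ℚ) * n ≥ c ∨ n = 0 := by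
    rcases Nat.eq_zero_or_pos n with h0 | h0
    · right; exact h0
    · left
      have : (1 : ℚ) ≤ n := by exact_mod_cast h0
      nlinarith [show (0:ℚ) < c by exact_mod_cast hc.pos]
  rcases this with h1 | h1
  · linarith
  · rw [h1] at heval
    simp at heval
    have : (2 : ℚ) ≤ c := by exact_mod_cast hc2
    linarith
end

section
/- Let $c$ be a squarefree natural number and $a,b$ integers with $\gcd(a,c)=1$. Then $S(a,b;c) \neq 0$. -/
/-!
Over a finite field of characteristic `p`, every value of an additive character is a `p`-th root
of unity, so a Kloosterman sum is a sum of `q - 1` of them. If such a sum `∑ ζ ^ eᵢ` vanished, the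
cyclotomic polynomial `Φ_p` would divide `∑ X ^ eᵢ` in `ℤ[X]`, and evaluating at `1` would give
`p ∣ q - 1`. For squarefree `c`, the Chinese remainder theorem `ZMod (m * n) ≃ ZMod m × ZMod n`
factors a Kloosterman sum modulo `c` into Kloosterman sums over the prime fields `ZMod p`, each
taken with the restriction of the character to that factor.
-/

open Finset Polynomial

noncomputable def kloostermanSum {R M : Type*} [CommRing R] [Fintype Rˣ] [CommRing M]
    (ψ : AddChar R M) (a b : R) : M :=
  ∑ u : Rˣ, ψ (a * u + b * ↑u⁻¹)

section KloostermanSum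

variable {R R₁ R₂ M : Type*} [CommRing R] [CommRing R₁] [CommRing R₂] [CommRing M]
  [Fintype Rˣ] [Fintype R₁ˣ] [Fintype R₂ˣ]

theorem kloostermanSum_ringEquiv (e : R ≃+* R₁) (ψ : AddChar R M) (a b : R) :
    kloostermanSum ψ a b =
      kloostermanSum (ψ.compAddMonoidHom e.symm.toAddMonoidHom) (e a) (e b) := by
  refine Fintype.sum_equiv (Units.mapEquiv e.toMulEquiv) _ _ fun u => ?_
  simp [← map_inv]

theorem kloostermanSum_prod [Fintype (R₁ × R₂)ˣ] (ψ : AddChar (R₁ × R₂) M) (a b : R₁ × R₂) :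
    kloostermanSum ψ a b =
      kloostermanSum (ψ.compAddMonoidHom (AddMonoidHom.inl R₁ R₂)) a.1 b.1 *
        kloostermanSum (ψ.compAddMonoidHom (AddMonoidHom.inr R₁ R₂)) a.2 b.2 := by
  rw [kloostermanSum, kloostermanSum, kloostermanSum, sum_mul_sum, ← Fintype.sum_prod_type']
  refine Fintype.sum_equiv MulEquiv.prodUnits.toEquiv _ _ fun u => ?_
  rw [AddChar.compAddMonoidHom_apply, AddChar.compAddMonoidHom_apply, ← ψ.map_add_eq_mul]
  congr 1
  ext <;> simp [MulEquiv.prodUnits]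

end KloostermanSum

theorem kloosterman_eq_kloostermanSum (a b : ℤ) (c : ℕ) [NeZero c] :
    kloosterman a b c = kloostermanSum ZMod.stdAddChar (a : ZMod c) (b : ZMod c) := by
  rw [kloosterman, ← sum_filter, kloostermanSum]
  symm
  refine sum_bij (fun u _ => (u : ZMod c).val) (fun u _ => ?_) (fun u _ v _ h => ?_)
    (fun x hx => ?_) (fun u _ => ?_)
  · simpa using ⟨ZMod.val_lt _, ZMod.val_coe_unit_coprime u⟩
  · exact Units.ext (ZMod.val_injective c h)
  · simp only [mem_filter, mem_range] at hx
    refine ⟨ZMod.unitOfCoprime x hx.2, mem_univ _, ?_⟩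
    rw [ZMod.coe_unitOfCoprime, ZMod.val_natCast_of_lt hx.1]
  · have hlift : (a : ZMod c) * u + b * ↑u⁻¹ =
        ((a * (u : ZMod c).val + b * (↑u⁻¹ : ZMod c).val : ℤ) : ZMod c) := by
      push_cast
      rw [ZMod.natCast_zmod_val, ZMod.natCast_zmod_val]
    rw [hlift, ZMod.stdAddChar_coe, ZMod.natCast_zmod_val, ZMod.inv_coe_unit]
    push_cast
    ring

theorem AddChar.pow_eq_one_of_charP {R M : Type*} [Ring R] [CommMonoid M] (p : ℕ) [CharP R p]
    (ψ : AddChar R M) (x : R) : ψ x ^ p = 1 := by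
  rw [← ψ.map_nsmul_eq_pow, nsmul_eq_mul, CharP.cast_eq_zero, zero_mul, ψ.map_zero_eq_one]

section CharZero

variable {K : Type*} [Field K] [CharZero K]

theorem IsPrimitiveRoot.sum_pow_ne_zero_of_not_dvd_card {p : ℕ} [Fact p.Prime] {ζ : K}
    (hζ : IsPrimitiveRoot ζ p) {ι : Type*} (s : Finset ι) (e : ι → ℕ) (hs : ¬ p ∣ #s) :
    ∑ i ∈ s, ζ ^ e i ≠ 0 := by
  intro hsum
  have hp : 0 < p := (Fact.out : p.Prime).pos
  obtain ⟨g, hg⟩ : cyclotomic p ℤ ∣ ∑ i ∈ s, X ^ e i := by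
    rw [cyclotomic_eq_minpoly hζ hp]
    exact minpoly.isIntegrallyClosed_dvd (hζ.isIntegral hp) (by simpa using hsum)
  have heval := congrArg (eval 1) hg
  simp only [eval_finsetSum, eval_pow, eval_X, one_pow, sum_const, nsmul_one, eval_mul,
    eval_one_cyclotomic_prime] at heval
  exact hs (by exact_mod_cast Dvd.intro _ heval.symm)

theorem sum_ne_zero_of_pow_prime_eq_one {p : ℕ} [Fact p.Prime] {ι : Type*} (s : Finset ι)
    {z : ι → K} (hz : ∀ i ∈ s, z i ^ p = 1) (hs : ¬ p ∣ #s) : ∑ i ∈ s, z i ≠ 0 := by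
  by_cases htriv : ∀ i ∈ s, z i = 1
  · rw [sum_congr rfl htriv, sum_const, nsmul_one, Nat.cast_ne_zero]
    intro h
    exact hs (h ▸ dvd_zero p)
  push Not at htriv
  obtain ⟨j, hj, hzj⟩ := htriv
  have hζ : IsPrimitiveRoot (z j) p :=
    IsPrimitiveRoot.iff_orderOf.mpr (orderOf_eq_prime (hz j hj) hzj)
  have hpow : ∀ i ∈ s, ∃ k, z j ^ k = z i := fun i hi =>
    (hζ.eq_pow_of_pow_eq_one (hz i hi)).imp fun _ h => h.2
  choose! e he using hpow
  rw [← sum_congr rfl he]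
  exact hζ.sum_pow_ne_zero_of_not_dvd_card s e hs

theorem FiniteField.kloostermanSum_ne_zero {F : Type*} [Field F] [Fintype F] [DecidableEq F]
    (ψ : AddChar F K) (a b : F) : kloostermanSum ψ a b ≠ 0 := by
  obtain ⟨p, _, n, hp, hcard⟩ := FiniteField.card' F
  have := Fact.mk hp
  refine sum_ne_zero_of_pow_prime_eq_one _ (fun u _ => ψ.pow_eq_one_of_charP p _) ?_
  rw [card_univ, Fintype.card_units, hcard]
  intro hdvd
  have hone := Nat.dvd_sub (dvd_pow_self p n.ne_zero) hdvd
  rw [Nat.sub_sub_self (Nat.one_le_pow _ _ hp.pos)] at hone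
  exact hp.not_dvd_one hone

theorem ZMod.kloostermanSum_ne_zero_of_squarefree {c : ℕ} [NeZero c] (hc : Squarefree c)
    (ψ : AddChar (ZMod c) K) (a b : ZMod c) : kloostermanSum ψ a b ≠ 0 := by
  revert ψ a b hc ‹NeZero c›
  induction c using Nat.recOnPosPrimePosCoprime with
  | zero =>
    intro _ hc
    exact absurd hc not_squarefree_zero
  | one =>
    intro _ _ ψ a b
    simp [kloostermanSum, Subsingleton.elim _ (0 : ZMod 1)]
  | prime_pow p n hp hn =>
    intro _ hc ψ a b
    have hn1 : n = 1 := ((Nat.squarefree_pow_iff hp.ne_one hn.ne').mp hc).2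
    subst hn1
    have : Fact (p ^ 1).Prime := ⟨by rwa [pow_one]⟩
    exact FiniteField.kloostermanSum_ne_zero ψ a b
  | coprime m n hm hn hmn ihm ihn =>
    intro _ hc ψ a b
    have : NeZero m := ⟨by omega⟩
    have : NeZero n := ⟨by omega⟩
    rw [kloostermanSum_ringEquiv (ZMod.chineseRemainder hmn), kloostermanSum_prod]
    exact mul_ne_zero (ihm hc.of_mul_left _ _ _) (ihn hc.of_mul_right _ _ _)

end CharZero

theorem stmt3_general (c : ℕ) (hc : Squarefree c) (a b : ℤ) :
    kloosterman a b c ≠ 0 := by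
  have : NeZero c := ⟨hc.ne_zero⟩
  rw [kloosterman_eq_kloostermanSum]
  exact ZMod.kloostermanSum_ne_zero_of_squarefree hc _ _ _

theorem stmt3 (c : ℕ) (hc : Squarefree c) (a b : ℤ) (ha : Int.gcd a c = 1) :
    kloosterman a b c ≠ 0 :=
  stmt3_general c hc a b
end

section
/- Let $q = p^{\beta}$ with $p$ an odd prime, $\beta \geq 2$, and let $a, b$ be integers with $p \nmid ab$. If $ab$ is a quadratic non-residue modulo $p$, then $S(a,b;q) = 0$. -/
theorem kloosterman_eq_sum_units (a b : ℤ) (c : ℕ) [NeZero c] :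
    kloosterman a b c = ∑ u : (ZMod c)ˣ,
      ZMod.stdAddChar ((a : ZMod c) * (u : ZMod c) + (b : ZMod c) * (↑u⁻¹ : ZMod c)) := by
  rw [kloosterman, ← Finset.sum_filter]
  refine Finset.sum_bij' (fun x hx => ZMod.unitOfCoprime x (Finset.mem_filter.mp hx).2)
    (fun u _ => (u : ZMod c).val) (fun _ _ => Finset.mem_univ _) (fun u _ => ?_) (fun x hx => ?_)
    (fun u _ => ?_) (fun x hx => ?_)
  · exact Finset.mem_filter.mpr
      ⟨Finset.mem_range.mpr (ZMod.val_lt _), ZMod.val_coe_unit_coprime u⟩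
  · simpa using ZMod.val_cast_of_lt (Finset.mem_range.mp (Finset.mem_filter.mp hx).1)
  · ext; simp
  · have hphase : (a : ZMod c) * x + b * (x : ZMod c)⁻¹
        = ((a * x + b * ((x : ZMod c)⁻¹.val : ℤ) : ℤ) : ZMod c) := by
      push_cast
      rw [ZMod.natCast_zmod_val]
    rw [ZMod.coe_unitOfCoprime, ← ZMod.inv_coe_unit, ZMod.coe_unitOfCoprime, hphase,
      ZMod.stdAddChar_coe]
    push_cast
    rfl

theorem AddChar.sum_units_mul_add_mul_inv_eq_zero {R R' : Type*} [CommRing R] [Fintype R]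
    [DecidableEq R] [CommRing R'] [IsDomain R'] [CharZero R'] {ψ : AddChar R R'}
    (hψ : ψ.IsPrimitive) {ε : R} (hε : ε * ε = 0) (a b : R)
    (h : ∀ x : Rˣ, ε * (a * x - b * ↑x⁻¹) ≠ 0) :
    ∑ x : Rˣ, ψ (a * x + b * ↑x⁻¹) = 0 := by
  set S := ∑ x : Rˣ, ψ (a * x + b * ↑x⁻¹)
  have shift (t : R) :
      S = ∑ x : Rˣ, ψ (a * x + b * ↑x⁻¹) * ψ (t * (ε * (a * x - b * ↑x⁻¹))) := by
    let u : Rˣ := ⟨1 + t * ε, 1 - t * ε, by linear_combination -t ^ 2 * hε,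
      by linear_combination -t ^ 2 * hε⟩
    refine (Equiv.sum_comp (Equiv.mulRight u) _).symm.trans (Fintype.sum_congr _ _ fun x => ?_)
    rw [← AddChar.map_add_eq_mul]
    congr 1
    simp only [Equiv.coe_mulRight, mul_inv_rev, Units.val_mul, u, Units.inv_mk]
    ring
  have : (Fintype.card R : R') * S = 0 := by
    rw [← nsmul_eq_mul, ← Finset.card_univ, ← Finset.sum_const,
      Finset.sum_congr rfl fun t _ => shift t, Finset.sum_comm]
    refine Finset.sum_eq_zero fun x _ => ?_
    rw [← Finset.mul_sum, AddChar.sum_mulShift _ hψ, if_neg (h x), Nat.cast_zero, mul_zero]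
  exact (mul_eq_zero.mp this).resolve_left (Nat.cast_ne_zero.mpr Fintype.card_ne_zero)

theorem ZMod.castHom_eq_zero_of_pow_pred_mul_eq_zero {p β : ℕ} [NeZero p] (hβ : β ≠ 0)
    {y : ZMod (p ^ β)} (h : (p : ZMod (p ^ β)) ^ (β - 1) * y = 0) :
    ZMod.castHom (dvd_pow_self p hβ) (ZMod p) y = 0 := by
  rw [← ZMod.natCast_zmod_val y, ← Nat.cast_pow, ← Nat.cast_mul,
    ZMod.natCast_eq_zero_iff] at h
  rw [← ZMod.natCast_zmod_val y, map_natCast, ZMod.natCast_eq_zero_iff]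
  have h' : p ^ (β - 1) * p ∣ p ^ (β - 1) * y.val := by
    rwa [← pow_succ, Nat.sub_add_cancel (Nat.one_le_iff_ne_zero.mpr hβ)]
  exact Nat.dvd_of_mul_dvd_mul_left (pow_pos (Nat.pos_of_ne_zero (NeZero.ne p)) _) h'

theorem isSquare_mul_of_mul_eq_mul {R : Type*} [CommRing R] {a b x y : R} (hxy : x * y = 1)
    (h : a * x = b * y) : IsSquare (a * b) :=
  ⟨a * x, by linear_combination (-a * b) * hxy - (a * x) * h⟩

theorem stmt6_general (p : ℕ) (hp : p.Prime) (β : ℕ) (hβ : 2 ≤ β)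
    (a b : ℤ) (hqnr : ¬ IsSquare ((a * b : ℤ) : ZMod p)) :
    kloosterman a b (p ^ β) = 0 := by
  have : NeZero p := ⟨hp.ne_zero⟩
  set ε : ZMod (p ^ β) := (p : ZMod (p ^ β)) ^ (β - 1)
  have hε : ε * ε = 0 := by
    rw [← pow_add]
    exact pow_eq_zero_of_le (show β ≤ β - 1 + (β - 1) by omega)
      (by rw [← Nat.cast_pow, ZMod.natCast_self])
  rw [kloosterman_eq_sum_units]
  refine AddChar.sum_units_mul_add_mul_inv_eq_zero (ZMod.isPrimitive_stdAddChar _) hε _ _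
    fun x hx => hqnr ?_
  have hx' := ZMod.castHom_eq_zero_of_pow_pred_mul_eq_zero (by omega) hx
  rw [map_sub, map_mul, map_mul, map_intCast, map_intCast, sub_eq_zero] at hx'
  push_cast
  exact isSquare_mul_of_mul_eq_mul (by rw [← map_mul, Units.mul_inv, map_one]) hx'

theorem stmt6 (p : ℕ) (hp : p.Prime) (hodd : Odd p) (β : ℕ) (hβ : 2 ≤ β)
    (a b : ℤ) (hab : ¬ ((p : ℤ) ∣ a * b))
    (hqnr : ¬ IsSquare ((a * b : ℤ) : ZMod p)) :
    kloosterman a b (p ^ β) = 0 :=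
  stmt6_general p hp β hβ a b hqnr
end

section
/- Let $q$ be an odd prime power with $q \equiv 1 \pmod 4$, and suppose $l$ is an integer coprime to $q$ with $l \equiv r \pmod q$, $0 \leq r \leq q-1$. If $p \nmid 2ab$ and $l^2 \equiv ab \pmod q$, then $2\sqrt{q}\,|\cos(4\pi r/q)| \geq 4\sqrt{q}\,\|\tfrac{1}{2} - \tfrac{4r}{q}\|$, and moreover $\|\tfrac{q-8r}{2q}\| \neq 0$, so that $|\cos(4\pi r/q)| \geq 1/q$. -/
/-- Distance from a real number to the nearest integer. -/
noncomputable def distNearestInt (x : ℝ) : ℝ := |x - round x|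

/-! With `x = (q - 8r) / (2q)` we have `cos (4πr/q) = sin (πx)`, and Jordan's inequality gives
`|sin (πx)| ≥ 2‖x‖`. As `x` has denominator `2q`, `‖x‖` is `0` or at least `1/(2q)`; it is not `0`,
since `2q ∣ q - 8r` forces `q ∣ r`, hence `q ∣ l`, which `gcd(l, q) = 1` and `q > 1` rule out. -/

open Real

lemma two_mul_distNearestInt_le_abs_sin_pi_mul (y : ℝ) :
    2 * distNearestInt y ≤ |sin (π * y)| := by
  have hz : |π * (y - round y)| ≤ π / 2 := by
    rw [abs_mul, abs_of_pos pi_pos]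
    nlinarith [abs_sub_round y, pi_pos]
  have hsin : |sin (π * (y - round y))| = |sin (π * y)| := by
    rw [mul_sub, mul_comm π (round y : ℝ), sin_sub_int_mul_pi, abs_mul, abs_neg_one_zpow, one_mul]
  calc 2 * distNearestInt y = 2 / π * |π * (y - round y)| := by
        rw [distNearestInt, abs_mul, abs_of_pos pi_pos]
        field_simp
    _ ≤ |sin (π * y)| := hsin ▸ mul_abs_le_abs_sin hz

lemma one_div_le_distNearestInt_intCast_div {k m : ℤ} (hm : 0 < m) (hk : ¬ m ∣ k) :
    1 / (m : ℝ) ≤ distNearestInt (k / m) := by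
  set n := round ((k : ℝ) / m)
  have hm' : (0 : ℝ) < m := by exact_mod_cast hm
  have hone : (1 : ℝ) ≤ |((k - m * n : ℤ) : ℝ)| := by
    exact_mod_cast Int.one_le_abs (sub_ne_zero.mpr fun h => hk ⟨n, h⟩)
  have hsub : (k : ℝ) / m - n = ((k - m * n : ℤ) : ℝ) / m := by
    push_cast
    field_simp
  rw [distNearestInt, hsub, abs_div, abs_of_pos hm']
  exact div_le_div_of_nonneg_right hone hm'.le

lemma not_dvd_eight_mul_of_modEq {q : ℕ} (hq : 1 < q) (hodd : Odd q) {l r : ℤ}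
    (hl : Int.gcd l q = 1) (hlr : l ≡ r [ZMOD q]) : ¬ (q : ℤ) ∣ 8 * r := by
  intro h8r
  have hq8 : IsCoprime (q : ℤ) 8 :=
    Nat.isCoprime_iff_coprime.mpr (hodd.coprime_two_right.pow_right 3)
  have hqr : (q : ℤ) ∣ r := hq8.dvd_of_dvd_mul_left h8r
  have hql : (q : ℤ) ∣ l := hlr.dvd_iff.mpr hqr
  have := (Int.isCoprime_iff_gcd_eq_one.mpr hl).isUnit_of_dvd' hql dvd_rfl
  rw [Int.isUnit_iff] at this
  omega

theorem stmt9_general (p : ℕ) (hp : p.Prime) (β : ℕ) (hβ : 1 ≤ β) (q : ℕ) (hq : q = p ^ β)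
    (hq4 : q % 4 = 1) (l r : ℤ)
    (hl : Int.gcd l q = 1) (hlr : l ≡ r [ZMOD (q : ℤ)]) :
    4 * Real.sqrt q * distNearestInt (1 / 2 - 4 * (r : ℝ) / q) ≤
        2 * Real.sqrt q * |Real.cos (4 * Real.pi * (r : ℝ) / q)| ∧
    distNearestInt (((q : ℝ) - 8 * (r : ℝ)) / (2 * q)) ≠ 0 ∧
    1 / (q : ℝ) ≤ |Real.cos (4 * Real.pi * (r : ℝ) / q)| := by
  have hq1 : 1 < q := hq ▸ Nat.one_lt_pow (by omega) hp.one_lt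
  have hqR : (0 : ℝ) < q := by positivity
  have hx : 1 / 2 - 4 * (r : ℝ) / q = ((q : ℝ) - 8 * r) / (2 * q) := by
    field_simp
    ring
  set x : ℝ := ((q : ℝ) - 8 * r) / (2 * q)
  have hcos : cos (4 * π * r / q) = sin (π * x) := by
    rw [← cos_pi_div_two_sub, ← hx]
    congr 1
    ring
  have hdist : 1 / (2 * q : ℝ) ≤ distNearestInt x := by
    have hndvd : ¬ (2 * q : ℤ) ∣ q - 8 * r := fun h =>
      not_dvd_eight_mul_of_modEq hq1 (Nat.odd_iff.mpr (by omega)) hl hlr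
        ((dvd_sub_right dvd_rfl).mp ((dvd_mul_left _ 2).trans h))
    simpa using one_div_le_distNearestInt_intCast_div (by omega) hndvd
  have hsin := two_mul_distNearestInt_le_abs_sin_pi_mul x
  refine ⟨?_, (lt_of_lt_of_le (by positivity) hdist).ne', ?_⟩
  · rw [hx, hcos]
    nlinarith [sqrt_nonneg q]
  · rw [hcos]
    calc 1 / (q : ℝ) = 2 * (1 / (2 * q)) := by ring
      _ ≤ 2 * distNearestInt x := by gcongr
      _ ≤ |sin (π * x)| := hsin

theorem stmt9 (p : ℕ) (hp : p.Prime) (β : ℕ) (hβ : 1 ≤ β) (q : ℕ) (hq : q = p ^ β)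
    (hq4 : q % 4 = 1) (a b l r : ℤ)
    (hl : Int.gcd l q = 1) (hlr : l ≡ r [ZMOD (q : ℤ)]) (hr0 : 0 ≤ r) (hr1 : r ≤ (q : ℤ) - 1)
    (hab : ¬ ((p : ℤ) ∣ 2 * a * b)) (hsq : l ^ 2 ≡ a * b [ZMOD (q : ℤ)]) :
    4 * Real.sqrt q * distNearestInt (1 / 2 - 4 * (r : ℝ) / q) ≤
        2 * Real.sqrt q * |Real.cos (4 * Real.pi * (r : ℝ) / q)| ∧
    distNearestInt (((q : ℝ) - 8 * (r : ℝ)) / (2 * q)) ≠ 0 ∧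
    1 / (q : ℝ) ≤ |Real.cos (4 * Real.pi * (r : ℝ) / q)| :=
  stmt9_general p hp β hβ q hq hq4 l r hl hlr
end

section
/- For every integer $k \geq 4$, $\int_4^{\infty} e^{-(k-1)\left(\frac{8}{9x} + \log\frac{9x}{10}\right)} dx \leq \frac{25}{18}\left(\frac{5}{18}\right)^{k-3} \frac{1}{k-1}$. -/
/-!
Write `n = k - 1`. For `x > 0` the integrand is `exp (-a / x) * (10 / (9x)) ^ n` with `a = 8n/9`,
and on `x ≥ 4` we have `10 / (9x) ≤ 5/18`, so all but two factors of `(10 / (9x)) ^ n` are at most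
`5/18`. The remaining `exp (-a / x) / x ^ 2` has the explicit antiderivative `exp (-a / x) / a`,
whose total increase over `(4, ∞)` is at most `1 / a`.
-/

open MeasureTheory Set Filter Topology Real

lemma hasDerivAt_exp_neg_div (a : ℝ) {x : ℝ} (hx : x ≠ 0) :
    HasDerivAt (fun x => exp (-a / x)) (a * exp (-a / x) / x ^ 2) x := by
  convert ((hasDerivAt_inv hx).const_mul (-a)).exp using 1
  · simp only [div_eq_mul_inv]
  · field_simp

lemma tendsto_exp_neg_div_atTop (a : ℝ) : Tendsto (fun x => exp (-a / x)) atTop (𝓝 1) := by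
  have h := (continuous_exp.tendsto 0).comp (tendsto_const_nhds (x := -a).div_atTop tendsto_id)
  simpa only [exp_zero, Function.comp_def, id_eq] using h

lemma continuousWithinAt_exp_neg_div (a : ℝ) {b : ℝ} (hb : 0 < b) :
    ContinuousWithinAt (fun x => exp (-a / x)) (Ici b) b :=
  (hasDerivAt_exp_neg_div a hb.ne').continuousAt.continuousWithinAt

lemma integrableOn_Ioi_mul_exp_neg_div_div_sq {a b : ℝ} (ha : 0 ≤ a) (hb : 0 < b) :
    IntegrableOn (fun x => a * exp (-a / x) / x ^ 2) (Ioi b) :=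
  integrableOn_Ioi_deriv_of_nonneg (continuousWithinAt_exp_neg_div a hb)
    (fun _ hx => hasDerivAt_exp_neg_div a (hb.trans hx).ne')
    (fun _ _ => by positivity) (tendsto_exp_neg_div_atTop a)

lemma integral_Ioi_mul_exp_neg_div_div_sq {a b : ℝ} (ha : 0 ≤ a) (hb : 0 < b) :
    ∫ x in Ioi b, a * exp (-a / x) / x ^ 2 = 1 - exp (-a / b) :=
  integral_Ioi_of_hasDerivAt_of_nonneg (continuousWithinAt_exp_neg_div a hb)
    (fun _ hx => hasDerivAt_exp_neg_div a (hb.trans hx).ne')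
    (fun _ _ => by positivity) (tendsto_exp_neg_div_atTop a)

lemma exp_neg_natCast_mul_add_log (n : ℕ) (s : ℝ) {t : ℝ} (ht : 0 < t) :
    exp (-n * (s + log t)) = exp (-n * s) * t⁻¹ ^ n := by
  rw [show -n * (s + log t) = -n * s + n * log t⁻¹ by rw [log_inv]; ring, exp_add, exp_nat_mul,
    exp_log (inv_pos.2 ht)]

lemma exp_neg_mul_add_log_le {n : ℕ} (hn : 2 ≤ n) {x : ℝ} (hx : 4 ≤ x) :
    exp (-n * (8 / (9 * x) + log (9 * x / 10))) ≤
      25 / (18 * n) * (5 / 18) ^ (n - 2) * (8 * n / 9 * exp (-(8 * n / 9) / x) / x ^ 2) := by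
  have hx0 : 0 < x := by linarith
  have hn0 : (0 : ℝ) < n := by positivity
  have hr : (9 * x / 10)⁻¹ ≤ 5 / 18 := by
    rw [inv_div, div_le_div_iff₀ (by positivity) (by norm_num)]
    linarith
  rw [exp_neg_natCast_mul_add_log n _ (by positivity), ← pow_sub_mul_pow _ hn]
  calc exp (-n * (8 / (9 * x))) * ((9 * x / 10)⁻¹ ^ (n - 2) * (9 * x / 10)⁻¹ ^ 2)
      ≤ exp (-n * (8 / (9 * x))) * ((5 / 18) ^ (n - 2) * (9 * x / 10)⁻¹ ^ 2) := by gcongr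
    _ = _ := by
      rw [show -(8 * n / 9) / x = -n * (8 / (9 * x)) by ring]
      field_simp
      ring

theorem stmt18 (k : ℕ) (hk : 4 ≤ k) :
    ∫ x in Set.Ioi (4 : ℝ),
        Real.exp (-((k : ℝ) - 1) * (8 / (9 * x) + Real.log (9 * x / 10))) ≤
      25 / 18 * ((5 : ℝ) / 18) ^ (k - 3) * (1 / ((k : ℝ) - 1)) := by
  obtain ⟨n, rfl⟩ : ∃ n, k = n + 1 := ⟨k - 1, by omega⟩
  have hn : 2 ≤ n := by omega
  have ha : (0 : ℝ) ≤ 8 * n / 9 := by positivity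
  rw [show n + 1 - 3 = n - 2 by omega]
  push_cast
  simp only [add_sub_cancel_right]
  set K : ℝ := 25 / (18 * n) * (5 / 18) ^ (n - 2)
  have hK : 0 ≤ K := by positivity
  calc ∫ x in Ioi (4 : ℝ), exp (-n * (8 / (9 * x) + log (9 * x / 10)))
      ≤ ∫ x in Ioi (4 : ℝ), K * (8 * n / 9 * exp (-(8 * n / 9) / x) / x ^ 2) :=
        integral_mono_of_nonneg (ae_of_all _ fun _ => (exp_pos _).le)
          ((integrableOn_Ioi_mul_exp_neg_div_div_sq ha four_pos).const_mul K)
          ((ae_restrict_iff' measurableSet_Ioi).2 <| ae_of_all _ fun _ hx =>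
            exp_neg_mul_add_log_le hn (le_of_lt hx))
    _ = K * (1 - exp (-(8 * n / 9) / 4)) := by
        rw [integral_const_mul, integral_Ioi_mul_exp_neg_div_div_sq ha four_pos]
    _ ≤ K := mul_le_of_le_one_right hK (sub_le_self _ (exp_pos _).le)
    _ = 25 / 18 * (5 / 18) ^ (n - 2) * (1 / n) := by ring
end
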